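/- Let m, n ∈ ℕ, let a₁, …, a_m be positive real numbers, let z₁, …, z_m be real numbers with z_ℓ < 1, and let s_{j,ℓ} ∈ ℂ with Re(s_{j,ℓ}) > 0 for all 1 ≤ j ≤ n, 1 ≤ ℓ ≤ m. Then the n×n complex matrix whose (j,k) entry is ∏_{ℓ=1}^{m} ∫₀^∞ x^{s_{j,ℓ} + conj(s_{k,ℓ}) − 1} e^{−a_ℓ x} / (1 − z_ℓ e^{−x}) dx is positive semidefinite. (Each integral equals Γ(s_{j,ℓ}+conj(s_{k,ℓ})) Φ(z_ℓ, s_{j,ℓ}+conj(s_{k,ℓ}), a_ℓ), where Φ is Lerch's transcendent.) -/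

import Mathlib

/-!
For each `l`, the matrix of the `l`-th integrals is a Gram matrix in `L²(0, ∞)`: its `(j, k)` entry is
`∫ f_j conj f_k` with `f_j x = x ^ (s_{j,l} - 1/2) * √(e^{-a_l x} / (1 - z_l e^{-x}))`,
and `f_j` is square integrable because the weight is at most a constant times `e^{-a_l x}`.
Hence every factor is positive semidefinite, and so is their entrywise product by Schur's theorem.
-/

open Complex ComplexOrder
open MeasureTheory Set Matrix

namespace Matrix

variable {n 𝕜 : Type*} [RCLike 𝕜]

theorem posSemidef_entrywise_prod [Finite n] {ι : Type*} (s : Finset ι)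
    {A : ι → Matrix n n 𝕜} (hA : ∀ i ∈ s, (A i).PosSemidef) :
    (of fun j k => ∏ i ∈ s, A i j k).PosSemidef := by
  classical
  induction s using Finset.induction_on with
  | empty => simpa [vecMulVec] using posSemidef_vecMulVec_self_star (1 : n → 𝕜)
  | insert a s ha ih =>
    simp_rw [Finset.prod_insert ha]
    exact (hA a (Finset.mem_insert_self a s)).hadamard
      (ih fun i hi => hA i (Finset.mem_insert_of_mem hi))

theorem PosSemidef.sum_mul_mul_star_nonneg [Fintype n] {A : Matrix n n 𝕜} (hA : A.PosSemidef)
    (c : n → 𝕜) : 0 ≤ ∑ j, ∑ k, A j k * c j * star (c k) := by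
  simpa [dotProduct, mulVec, Finset.mul_sum, mul_comm, mul_left_comm, mul_assoc]
    using hA.dotProduct_mulVec_nonneg (star c)

end Matrix

theorem MeasureTheory.posSemidef_integral_mul_conj {𝕜 X ι : Type*} [RCLike 𝕜] [Finite ι]
    [MeasurableSpace X] {μ : Measure X} {f : ι → X → 𝕜} (hf : ∀ i, MemLp (f i) 2 μ) :
    (of fun j k => ∫ x, f j x * starRingEnd 𝕜 (f k x) ∂μ).PosSemidef := by
  convert posSemidef_gram 𝕜 fun i => (hf i).star.toLp using 1
  ext j k
  rw [gram_apply, L2.inner_def]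
  refine integral_congr_ae ?_
  filter_upwards [(hf j).star.coeFn_toLp, (hf k).star.coeFn_toLp] with x hj hk
  simp [hj, hk, mul_comm]

noncomputable def lerchWeight (a z x : ℝ) : ℝ := Real.exp (-a * x) / (1 - z * Real.exp (-x))

section lerch
variable {a z : ℝ}

-- `1 - z e^{-x} = (1 - e^{-x}) * 1 + e^{-x} * (1 - z)` is a convex combination.
theorem min_one_sub_le_one_sub_mul_exp_neg (z : ℝ) {x : ℝ} (hx : 0 ≤ x) :
    min 1 (1 - z) ≤ 1 - z * Real.exp (-x) := by
  have h0 : 0 < Real.exp (-x) := Real.exp_pos _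
  have h1 : Real.exp (-x) ≤ 1 := Real.exp_le_one_iff.mpr (by linarith)
  rcases min_cases 1 (1 - z) with ⟨h, hle⟩ | ⟨h, hle⟩ <;> rw [h] <;> nlinarith

theorem one_sub_mul_exp_neg_pos (hz : z < 1) {x : ℝ} (hx : 0 ≤ x) :
    0 < 1 - z * Real.exp (-x) :=
  (lt_min one_pos (sub_pos.mpr hz)).trans_le (min_one_sub_le_one_sub_mul_exp_neg z hx)

theorem lerchWeight_nonneg (hz : z < 1) {x : ℝ} (hx : 0 ≤ x) : 0 ≤ lerchWeight a z x :=
  div_nonneg (Real.exp_pos _).le (one_sub_mul_exp_neg_pos hz hx).le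

theorem lerchWeight_le (hz : z < 1) {x : ℝ} (hx : 0 ≤ x) :
    lerchWeight a z x ≤ (min 1 (1 - z))⁻¹ * Real.exp (-a * x) := by
  rw [lerchWeight, div_eq_inv_mul]
  exact mul_le_mul_of_nonneg_right (inv_anti₀ (lt_min one_pos (sub_pos.mpr hz))
    (min_one_sub_le_one_sub_mul_exp_neg z hx)) (Real.exp_pos _).le

theorem integrableOn_rpow_mul_lerchWeight (ha : 0 < a) (hz : z < 1) {t : ℝ} (ht : 0 < t) :
    IntegrableOn (fun x => x ^ (t - 1) * lerchWeight a z x) (Ioi 0) := by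
  have hbound : IntegrableOn (fun x => (min 1 (1 - z))⁻¹ * (x ^ (t - 1) * Real.exp (-a * x)))
      (Ioi 0) := by
    have h := integrableOn_rpow_mul_exp_neg_mul_rpow (s := t - 1) (by linarith) one_pos ha
    simp_rw [Real.rpow_one] at h
    exact h.const_mul _
  refine hbound.mono' (by unfold lerchWeight; fun_prop) ?_
  filter_upwards [ae_restrict_mem measurableSet_Ioi] with x (hx : 0 < x)
  have hxt : 0 ≤ x ^ (t - 1) := Real.rpow_nonneg hx.le _
  rw [Real.norm_of_nonneg (mul_nonneg hxt (lerchWeight_nonneg hz hx.le)), mul_left_comm]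
  exact mul_le_mul_of_nonneg_left (lerchWeight_le hz hx.le) hxt

noncomputable def lerchFactor (a z : ℝ) (s : ℂ) (x : ℝ) : ℂ :=
  (x : ℂ) ^ (s - 1 / 2) * (Real.sqrt (lerchWeight a z x) : ℂ)

theorem norm_lerchFactor_sq (hz : z < 1) (s : ℂ) {x : ℝ} (hx : 0 < x) :
    ‖lerchFactor a z s x‖ ^ 2 = x ^ (2 * s.re - 1) * lerchWeight a z x := by
  rw [lerchFactor, norm_mul, norm_cpow_eq_rpow_re_of_pos hx, Complex.norm_real,
    Real.norm_of_nonneg (Real.sqrt_nonneg _), mul_pow, Real.sq_sqrt (lerchWeight_nonneg hz hx.le),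
    sq, ← Real.rpow_add hx]
  congr 2
  simp only [one_div, sub_re, inv_re, re_ofNat, normSq_ofNat, div_self_mul_self']
  ring

theorem memLp_lerchFactor (ha : 0 < a) (hz : z < 1) {s : ℂ} (hs : 0 < s.re) :
    MemLp (lerchFactor a z s) 2 (volume.restrict (Ioi 0)) := by
  refine (memLp_two_iff_integrable_sq_norm (by unfold lerchFactor lerchWeight; fun_prop)).mpr ?_
  refine (integrableOn_rpow_mul_lerchWeight ha hz (by linarith : 0 < 2 * s.re)).congr_fun
    (fun x (hx : 0 < x) => (norm_lerchFactor_sq hz s hx).symm) measurableSet_Ioi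

theorem lerchFactor_mul_conj (hz : z < 1) (s s' : ℂ) {x : ℝ} (hx : 0 < x) :
    lerchFactor a z s x * starRingEnd ℂ (lerchFactor a z s' x)
      = (x : ℂ) ^ (s + starRingEnd ℂ s' - 1) * Complex.exp (-(a : ℂ) * x)
          / (1 - (z : ℂ) * Complex.exp (-(x : ℂ))) := by
  have harg : (x : ℂ).arg ≠ Real.pi := by
    rw [Complex.arg_ofReal_of_nonneg hx.le]; exact Real.pi_ne_zero.symm
  have hconj : starRingEnd ℂ ((x : ℂ) ^ (s' - 1 / 2)) = (x : ℂ) ^ (starRingEnd ℂ s' - 1 / 2) := by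
    simpa [map_ofNat] using (Complex.conj_cpow (x : ℂ) (starRingEnd ℂ s' - 1 / 2) harg).symm
  have hsqrt := Real.mul_self_sqrt (lerchWeight_nonneg (a := a) hz hx.le)
  simp only [lerchFactor, map_mul, hconj, Complex.conj_ofReal]
  rw [mul_mul_mul_comm, ← Complex.ofReal_mul, hsqrt,
    ← Complex.cpow_add _ _ (Complex.ofReal_ne_zero.mpr hx.ne'), lerchWeight]
  push_cast
  ring_nf

theorem posSemidef_lerchIntegral (ha : 0 < a) (hz : z < 1) {ι : Type*} [Finite ι] {s : ι → ℂ}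
    (hs : ∀ j, 0 < (s j).re) :
    (of fun j k => ∫ x in Ioi (0 : ℝ), (x : ℂ) ^ (s j + starRingEnd ℂ (s k) - 1)
      * Complex.exp (-(a : ℂ) * x) / (1 - (z : ℂ) * Complex.exp (-(x : ℂ)))).PosSemidef := by
  have hentry : ∀ j k, ∫ x in Ioi (0 : ℝ), lerchFactor a z (s j) x
      * starRingEnd ℂ (lerchFactor a z (s k) x) = ∫ x in Ioi (0 : ℝ),
        (x : ℂ) ^ (s j + starRingEnd ℂ (s k) - 1) * Complex.exp (-(a : ℂ) * x)
          / (1 - (z : ℂ) * Complex.exp (-(x : ℂ))) := fun j k =>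
    setIntegral_congr_fun measurableSet_Ioi fun x hx => lerchFactor_mul_conj hz (s j) (s k) hx
  simpa only [hentry] using posSemidef_integral_mul_conj fun j => memLp_lerchFactor ha hz (hs j)

end lerch

/-- For real `a_ℓ > 0`, real `z_ℓ < 1`, and `s_{j,ℓ} ∈ ℂ` with `Re(s_{j,ℓ}) > 0`, the matrix
with `(j,k)` entry
`∏_{ℓ=1}^m ∫₀^∞ x^{s_{j,ℓ} + conj s_{k,ℓ} - 1} e^{-a_ℓ x} / (1 - z_ℓ e^{-x}) dx`
is positive semidefinite.  (Each integral equals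
`Γ(s_{j,ℓ} + conj s_{k,ℓ}) Φ(z_ℓ, s_{j,ℓ} + conj s_{k,ℓ}, a_ℓ)`, where `Φ` is Lerch's
transcendent.) -/
theorem lerch_matrix_posSemidef (m n : ℕ) (a z : Fin m → ℝ)
    (ha : ∀ l, 0 < a l) (hz : ∀ l, z l < 1)
    (s : Fin n → Fin m → ℂ) (hs : ∀ j l, 0 < (s j l).re) :
    ∀ c : Fin n → ℂ,
      0 ≤ ∑ j : Fin n, ∑ k : Fin n,
        (∏ l : Fin m,
            ∫ x : ℝ in Set.Ioi (0 : ℝ),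
              (x : ℂ) ^ (s j l + (starRingEnd ℂ) (s k l) - 1)
                * Complex.exp (-(a l : ℂ) * x) / (1 - (z l : ℂ) * Complex.exp (-(x : ℂ))))
          * c j * (starRingEnd ℂ) (c k) :=
  (posSemidef_entrywise_prod Finset.univ fun l _ =>
    posSemidef_lerchIntegral (ha l) (hz l) fun j => hs j l).sum_mul_mul_star_nonneg
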